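/- Let (T_1,…,T_{n−1}) be a vine on n ≥ 2 variables and let 1 ≤ k ≤ n−2. If an element v ∈ {1,…,n} belongs to the intersection A ∩ B of two adjacent clusters A, B of T_k, then v also belongs to the intersection of some two adjacent clusters of T_{k+1}. -/

import Mathlib

/-- A *vine* on the `n` variables `{0, …, n-1}` (represented by `Fin n`): a sequence of
cluster trees `T_1, …, T_(n-1)`, where the clusters of `T_k` are `k`-element subsets of
the variables, `T_k` has `n - k + 1` clusters, `T_1` is a tree on the `n` singletons,
for `k ≥ 2` the clusters of `T_k` are exactly the unions `A ∪ B` over the edges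
`{A, B}` of `T_(k-1)`, and any two adjacent clusters of `T_k` intersect in exactly
`k - 1` elements. -/
structure Vine (n : ℕ) where
  /-- the set of clusters (nodes) of the tree `T_k` -/
  clusters : ℕ → Set (Finset (Fin n))
  /-- the adjacency (edge) relation of the tree `T_k` -/
  adj : ℕ → Finset (Fin n) → Finset (Fin n) → Prop
  adj_symm : ∀ k A B, adj k A B → adj k B A
  adj_ne : ∀ k A B, adj k A B → A ≠ B
  adj_mem : ∀ k A B, adj k A B → A ∈ clusters k ∧ B ∈ clusters k
  card_of_mem_clusters : ∀ k, 1 ≤ k → k ≤ n - 1 → ∀ A ∈ clusters k, A.card = k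
  ncard_clusters : ∀ k, 1 ≤ k → k ≤ n - 1 → (clusters k).ncard = n - k + 1
  clusters_one : clusters 1 = Set.range fun i : Fin n => ({i} : Finset (Fin n))
  clusters_succ : ∀ k, 2 ≤ k → k ≤ n - 1 →
    clusters k = {C | ∃ A B, adj (k - 1) A B ∧ C = A ∪ B}
  card_inter_of_adj : ∀ k, 1 ≤ k → k ≤ n - 1 →
    ∀ A B, adj k A B → (A ∩ B).card = k - 1
  isTree : ∀ k, 1 ≤ k → k ≤ n - 1 →
    ({ Adj := fun A B : clusters k => adj k A.1 B.1,
       symm := ⟨fun A B h => adj_symm k A.1 B.1 h⟩,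
       loopless := ⟨fun A h => adj_ne k A.1 A.1 h rfl⟩ } :
      SimpleGraph (clusters k)).IsTree

/-- The tree `T_k` of a vine, as a simple graph on its set of clusters. -/
def Vine.graph {n : ℕ} (W : Vine n) (k : ℕ) : SimpleGraph (W.clusters k) where
  Adj A B := W.adj k A.1 B.1
  symm := ⟨fun A B h => W.adj_symm k A.1 B.1 h⟩
  loopless := ⟨fun A h => W.adj_ne k A.1 A.1 h rfl⟩


open SimpleGraph Finset in

private lemma tree_path_length {V : Type*} {G : SimpleGraph V} (hT : G.IsTree) {u r : V}
    (p : G.Walk u r) (hp : p.IsPath) : p.length = G.dist u r := by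
  classical
  obtain ⟨q, hq, hql⟩ := hT.isConnected.exists_path_of_dist u r
  have := (hT.existsUnique_path u r).unique hp hq
  rw [this, hql]

private lemma tree_adj_dist_ne {V : Type*} {G : SimpleGraph V} (hT : G.IsTree) (r : V)
    {u x : V} (h : G.Adj u x) : G.dist u r ≠ G.dist x r := by
  classical
  obtain ⟨q, hq, hql⟩ := hT.isConnected.exists_path_of_dist x r
  by_cases hu : u ∈ q.support
  · have hle : G.dist u r ≤ (q.dropUntil u hu).length := SimpleGraph.dist_le _
    have hsum : (q.takeUntil u hu).length + (q.dropUntil u hu).length = q.length := by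
      have := congr_arg SimpleGraph.Walk.length (q.take_spec hu)
      rwa [SimpleGraph.Walk.length_append] at this
    have hpos : 0 < (q.takeUntil u hu).length := by
      rcases Nat.eq_zero_or_pos (q.takeUntil u hu).length with h0 | h0
      · exact absurd (SimpleGraph.Walk.eq_of_length_eq_zero h0) h.ne'
      · exact h0
    omega
  · have hpath : (SimpleGraph.Walk.cons h q).IsPath := hq.cons hu
    have := tree_path_length hT _ hpath
    rw [SimpleGraph.Walk.length_cons, hql] at this
    omega

private lemma tree_closer_unique {V : Type*} {G : SimpleGraph V} (hT : G.IsTree) (r : V)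
    {u x y : V} (hx : G.Adj u x) (hy : G.Adj u y)
    (hdx : G.dist x r < G.dist u r) (hdy : G.dist y r < G.dist u r) : x = y := by
  classical
  obtain ⟨qx, hqx, hqxl⟩ := hT.isConnected.exists_path_of_dist x r
  obtain ⟨qy, hqy, hqyl⟩ := hT.isConnected.exists_path_of_dist y r
  have hux : u ∉ qx.support := by
    intro hu
    have : G.dist u r ≤ (qx.dropUntil u hu).length := SimpleGraph.dist_le _
    have h2 := SimpleGraph.Walk.length_dropUntil_le qx hu
    omega
  have huy : u ∉ qy.support := by
    intro hu
    have : G.dist u r ≤ (qy.dropUntil u hu).length := SimpleGraph.dist_le _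
    have h2 := SimpleGraph.Walk.length_dropUntil_le qy hu
    omega
  have hpx : (SimpleGraph.Walk.cons hx qx).IsPath := hqx.cons hux
  have hpy : (SimpleGraph.Walk.cons hy qy).IsPath := hqy.cons huy
  have heq := (hT.existsUnique_path u r).unique hpx hpy
  have := congr_arg (fun w : G.Walk u r => w.getVert 1) heq
  simpa using this

open SimpleGraph Finset in
private lemma tree_pairs_bound {V : Type*} [Fintype V] [DecidableEq V] {G : SimpleGraph V}
    [DecidableRel G.Adj] (hT : G.IsTree) (r : V) (S : Finset V) (hS : S.Nonempty) :
    (Finset.univ.filter fun p : V × V => G.Adj p.1 p.2 ∧ p.1 ∈ S ∧ p.2 ∈ S).card + 2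
      ≤ 2 * S.card := by
  classical
  obtain ⟨r0, hr0S, hr0⟩ := S.exists_min_image (fun v => G.dist v r) hS
  set T : Finset (V × V) :=
    Finset.univ.filter fun p : V × V => G.Adj p.1 p.2 ∧ p.1 ∈ S ∧ p.2 ∈ S with hT0
  set T1 := T.filter (fun p : V × V => G.dist p.1 r < G.dist p.2 r) with hT1
  set T2 := T.filter (fun p : V × V => ¬ G.dist p.1 r < G.dist p.2 r) with hT2
  have hsplit : T1.card + T2.card = T.card :=
    Finset.card_filter_add_card_filter_not _
  have hmemT : ∀ p : V × V, p ∈ T → G.Adj p.1 p.2 ∧ p.1 ∈ S ∧ p.2 ∈ S := by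
    intro p hp
    simpa [hT0] using hp
  have hb1 : T1.card ≤ (S.erase r0).card := by
    apply Finset.card_le_card_of_injOn (fun p => p.2)
    · intro p hp
      rw [hT1, Finset.mem_coe, Finset.mem_filter] at hp
      obtain ⟨hpT, hd⟩ := hp
      obtain ⟨hadj, h1, h2⟩ := hmemT p hpT
      refine Finset.mem_erase.2 ⟨?_, h2⟩
      intro hpe
      beta_reduce at hpe
      have := hr0 p.1 h1
      rw [← hpe] at this
      omega
    · intro p hp q hq hpq
      simp only [hT1, Finset.mem_filter, Finset.mem_coe] at hp hq
      obtain ⟨hpT, hdp⟩ := hp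
      obtain ⟨hqT, hdq⟩ := hq
      obtain ⟨hadjp, -, -⟩ := hmemT p hpT
      obtain ⟨hadjq, -, -⟩ := hmemT q hqT
      have hpq' : p.2 = q.2 := hpq
      have : p.1 = q.1 := by
        rw [hpq'] at hadjp hdp
        exact tree_closer_unique hT r hadjp.symm hadjq.symm hdp hdq
      exact Prod.ext this hpq'
  have hb2 : T2.card ≤ (S.erase r0).card := by
    apply Finset.card_le_card_of_injOn (fun p => p.1)
    · intro p hp
      rw [hT2, Finset.mem_coe, Finset.mem_filter] at hp
      obtain ⟨hpT, hd⟩ := hp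
      obtain ⟨hadj, h1, h2⟩ := hmemT p hpT
      have hne := tree_adj_dist_ne hT r hadj
      refine Finset.mem_erase.2 ⟨?_, h1⟩
      intro hpe
      beta_reduce at hpe
      have := hr0 p.2 h2
      rw [← hpe] at this
      omega
    · intro p hp q hq hpq
      simp only [hT2, Finset.mem_filter, Finset.mem_coe] at hp hq
      obtain ⟨hpT, hdp⟩ := hp
      obtain ⟨hqT, hdq⟩ := hq
      obtain ⟨hadjp, -, -⟩ := hmemT p hpT
      obtain ⟨hadjq, -, -⟩ := hmemT q hqT
      have hnp := tree_adj_dist_ne hT r hadjp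
      have hnq := tree_adj_dist_ne hT r hadjq
      have hpq' : p.1 = q.1 := hpq
      have : p.2 = q.2 := by
        rw [hpq'] at hadjp hdp hnp
        exact tree_closer_unique hT r hadjp hadjq (by omega) (by omega)
      exact Prod.ext hpq' this
  have herase : (S.erase r0).card = S.card - 1 := Finset.card_erase_of_mem hr0S
  have hSpos : 1 ≤ S.card := Finset.card_pos.2 hS
  omega

private lemma vine_graph_isTree {n : ℕ} (W : Vine n) (k : ℕ) (h1 : 1 ≤ k) (h2 : k ≤ n - 1) :
    (W.graph k).IsTree := W.isTree k h1 h2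

private lemma vine_cover {n : ℕ} (W : Vine n) :
    ∀ j, 1 ≤ j → j ≤ n - 1 → ∀ w : Fin n, ∃ C ∈ W.clusters j, w ∈ C := by
  intro j
  induction j with
  | zero => intro h; omega
  | succ j ih =>
    intro h1 h2 w
    rcases Nat.eq_zero_or_pos j with rfl | hj
    · refine ⟨{w}, ?_, Finset.mem_singleton_self w⟩
      rw [W.clusters_one]
      exact ⟨w, rfl⟩
    · have hj2 : j ≤ n - 1 := by omega
      obtain ⟨C, hC, hwC⟩ := ih hj hj2 w
      have hcard := W.ncard_clusters j hj hj2
      have h2' : 1 < (W.clusters j).ncard := by omega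
      obtain ⟨C', hC', hne⟩ := Set.exists_ne_of_one_lt_ncard h2' C
      have htree := vine_graph_isTree W j hj hj2
      obtain ⟨p⟩ := htree.isConnected.preconnected ⟨C, hC⟩ ⟨C', hC'⟩
      cases p with
      | nil => exact absurd rfl hne
      | @cons _ t _ h q =>
        refine ⟨C ∪ t.1, ?_, Finset.mem_union_left _ hwC⟩
        rw [W.clusters_succ (j + 1) (by omega) h2]
        exact ⟨C, t.1, by have h' : W.adj j C t.1 := h; simpa using h', rfl⟩

private lemma vine_two_clusters {n : ℕ} (W : Vine n) (k : ℕ) (hk1 : 1 ≤ k)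
    (hk2 : k ≤ n - 2) (hn : 2 ≤ n)
    {A B : Finset (Fin n)} (hadj : W.adj k A B) (v : Fin n) (hvA : v ∈ A) (hvB : v ∈ B) :
    ∃ C1 C2 : Finset (Fin n), C1 ∈ W.clusters (k+1) ∧ C2 ∈ W.clusters (k+1) ∧
      C1 ≠ C2 ∧ v ∈ C1 ∧ v ∈ C2 := by
  classical
  have hk : k ≤ n - 1 := by omega
  have hk' : k + 1 ≤ n - 1 := by omega
  haveI : Fintype ↥(W.clusters k) := (Set.toFinite _).fintype
  haveI : DecidableRel (W.graph k).Adj := Classical.decRel _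
  have htree := vine_graph_isTree W k hk1 hk
  have hcV : Fintype.card ↥(W.clusters k) = n - k + 1 := by
    rw [← Nat.card_eq_fintype_card, Nat.card_coe_set_eq, W.ncard_clusters k hk1 hk]
  have hecount : (W.graph k).edgeFinset.card = n - k := by
    have := htree.card_edgeFinset
    omega
  set f : Sym2 ↥(W.clusters k) → Finset (Fin n) :=
    Sym2.lift ⟨fun a b => a.1 ∪ b.1, fun a b => Finset.union_comm a.1 b.1⟩ with hf
  have hfin : (W.clusters (k+1)).Finite := Set.toFinite _
  have himg : (W.graph k).edgeFinset.image f = hfin.toFinset := by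
    ext C
    simp only [Finset.mem_image, Set.Finite.mem_toFinset]
    constructor
    · rintro ⟨e, he, rfl⟩
      induction e using Sym2.ind with
      | _ a b =>
        rw [SimpleGraph.mem_edgeFinset, SimpleGraph.mem_edgeSet] at he
        rw [W.clusters_succ (k + 1) (by omega) hk']
        exact ⟨a.1, b.1, by have he' : W.adj k a.1 b.1 := he; simpa using he', by simp [hf]⟩
    · intro hC
      rw [W.clusters_succ (k + 1) (by omega) hk'] at hC
      obtain ⟨A', B', hadj', rfl⟩ := hC
      simp only [Nat.add_sub_cancel] at hadj'
      obtain ⟨hA', hB'⟩ := W.adj_mem k A' B' hadj'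
      exact ⟨s(⟨A', hA'⟩, ⟨B', hB'⟩), by rwa [SimpleGraph.mem_edgeFinset,
        SimpleGraph.mem_edgeSet], by simp [hf]⟩
  have hcards : ((W.graph k).edgeFinset.image f).card = (W.graph k).edgeFinset.card := by
    rw [himg, hecount, ← Set.ncard_eq_toFinset_card _ hfin,
      W.ncard_clusters (k+1) (by omega) hk']
    omega
  have hinj : Set.InjOn f ((W.graph k).edgeFinset : Set (Sym2 ↥(W.clusters k))) :=
    Finset.card_image_iff.1 hcards
  obtain ⟨hA, hB⟩ := W.adj_mem k A B hadj
  set a : ↥(W.clusters k) := ⟨A, hA⟩ with ha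
  set b : ↥(W.clusters k) := ⟨B, hB⟩ with hb
  have hab : a ≠ b := by
    intro h
    exact W.adj_ne k A B hadj (congrArg Subtype.val h)
  have hadjab : (W.graph k).Adj a b := hadj
  -- find a third vertex
  have hz : ∃ z : ↥(W.clusters k), z ≠ a ∧ z ≠ b := by
    have h3 : 3 ≤ Fintype.card ↥(W.clusters k) := by omega
    have hbmem : a ∈ Finset.univ.erase b := Finset.mem_erase.2 ⟨hab, Finset.mem_univ _⟩
    have hcard2 : 1 ≤ ((Finset.univ.erase b).erase a).card := by
      rw [Finset.card_erase_of_mem hbmem, Finset.card_erase_of_mem (Finset.mem_univ b),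
        Finset.card_univ]
      omega
    obtain ⟨z, hzmem⟩ := Finset.card_pos.1 hcard2
    rw [Finset.mem_erase, Finset.mem_erase] at hzmem
    exact ⟨z, hzmem.1, hzmem.2.1⟩
  obtain ⟨z, hza, hzb⟩ := hz
  obtain ⟨p⟩ := htree.isConnected.preconnected a z
  obtain ⟨d, -, hdfst, hdsnd⟩ := p.exists_boundary_dart ({a, b} : Set ↥(W.clusters k))
    (by simp) (by simp [hza, hzb])
  have hdadj : (W.graph k).Adj d.fst d.snd := d.adj
  have hxa : d.snd ≠ a := fun h => hdsnd (by simp [h])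
  have hxb : d.snd ≠ b := fun h => hdsnd (by simp [h])
  have hedge1 : s(a, b) ∈ (W.graph k).edgeFinset := by
    rwa [SimpleGraph.mem_edgeFinset, SimpleGraph.mem_edgeSet]
  have hedge2 : s(d.fst, d.snd) ∈ (W.graph k).edgeFinset := by
    rwa [SimpleGraph.mem_edgeFinset, SimpleGraph.mem_edgeSet]
  have hCmem : A ∪ B ∈ W.clusters (k+1) := by
    rw [W.clusters_succ (k + 1) (by omega) hk']
    exact ⟨A, B, by simpa using hadj, rfl⟩
  simp only [Set.mem_insert_iff, Set.mem_singleton_iff] at hdfst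
  rcases hdfst with hu | hu
  · -- d.fst = a
    refine ⟨A ∪ B, A ∪ d.snd.1, hCmem, ?_, ?_, Finset.mem_union_left _ hvA,
      Finset.mem_union_left _ hvA⟩
    · rw [W.clusters_succ (k + 1) (by omega) hk']
      refine ⟨A, d.snd.1, ?_, rfl⟩
      have : W.adj k d.fst.1 d.snd.1 := hdadj
      rw [hu] at this
      simpa using this
    · intro he
      have hfe : f s(a, b) = f s(d.fst, d.snd) := by
        simp only [hf, Sym2.lift_mk, hu]
        exact he
      have := hinj hedge1 hedge2 hfe
      rw [Sym2.eq_iff] at this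
      rcases this with ⟨-, h2⟩ | ⟨h1, -⟩
      · exact hxb h2.symm
      · exact hxa h1.symm
  · -- d.fst = b
    refine ⟨A ∪ B, B ∪ d.snd.1, hCmem, ?_, ?_, Finset.mem_union_left _ hvA,
      Finset.mem_union_left _ hvB⟩
    · rw [W.clusters_succ (k + 1) (by omega) hk']
      refine ⟨B, d.snd.1, ?_, rfl⟩
      have : W.adj k d.fst.1 d.snd.1 := hdadj
      rw [hu] at this
      simpa using this
    · intro he
      have hfe : f s(a, b) = f s(d.fst, d.snd) := by
        simp only [hf, Sym2.lift_mk, hu]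
        exact he
      have := hinj hedge1 hedge2 hfe
      rw [Sym2.eq_iff] at this
      rcases this with ⟨h1, -⟩ | ⟨h1, -⟩
      · rw [hu] at h1; exact hab h1
      · exact hxa h1.symm

/-- In a vine on `n ≥ 2` variables, if an element `v` belongs to the intersection
`A ∩ B` of two adjacent clusters `A`, `B` of `T_k` (with `1 ≤ k ≤ n - 2`), then `v`
also belongs to the intersection of some two adjacent clusters of `T_(k+1)`. -/
theorem vine_separator_persists {n : ℕ} (hn : 2 ≤ n) (W : Vine n)
    (k : ℕ) (hk1 : 1 ≤ k) (hk2 : k ≤ n - 2)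
    (A B : Finset (Fin n)) (hadj : W.adj k A B)
    (v : Fin n) (hv : v ∈ A ∩ B) :
    ∃ C D : Finset (Fin n), W.adj (k + 1) C D ∧ v ∈ C ∩ D := by
  classical
  rw [Finset.mem_inter] at hv
  obtain ⟨hvA, hvB⟩ := hv
  have hK1 : 1 ≤ k + 1 := by omega
  have hK2 : k + 1 ≤ n - 1 := by omega
  haveI : Fintype ↥(W.clusters (k+1)) := (Set.toFinite _).fintype
  haveI : DecidableRel (W.graph (k+1)).Adj := Classical.decRel _
  have htree : (W.graph (k+1)).IsTree := W.isTree (k+1) hK1 hK2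
  have hcV : Fintype.card ↥(W.clusters (k+1)) = n - k := by
    rw [← Nat.card_eq_fintype_card, Nat.card_coe_set_eq,
      W.ncard_clusters (k+1) hK1 hK2]
    omega
  have hecount : (W.graph (k+1)).edgeFinset.card = n - k - 1 := by
    have := htree.card_edgeFinset
    omega
  set P : Finset (↥(W.clusters (k+1)) × ↥(W.clusters (k+1))) :=
    Finset.univ.filter fun p => (W.graph (k+1)).Adj p.1 p.2 with hP
  have hPcard : P.card = 2 * (n - k - 1) := by
    rw [← hecount, hP]
    rw [← SimpleGraph.two_mul_card_edgeFinset]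
  set t : Fin n → ℕ := fun w => (P.filter fun p => w ∈ p.1.1 ∧ w ∈ p.2.1).card with ht
  set m : Fin n → ℕ := fun w => (Finset.univ.filter
    fun C : ↥(W.clusters (k+1)) => w ∈ C.1).card with hm
  have hsum1 : ∑ w : Fin n, t w = P.card * k := by
    have h1 : ∀ w : Fin n, t w = ∑ p ∈ P, if w ∈ p.1.1 ∧ w ∈ p.2.1 then 1 else 0 := by
      intro w
      rw [ht]
      exact Finset.card_filter _ _
    calc ∑ w : Fin n, t w
        = ∑ w : Fin n, ∑ p ∈ P, if w ∈ p.1.1 ∧ w ∈ p.2.1 then 1 else 0 := by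
          exact Finset.sum_congr rfl fun w _ => h1 w
      _ = ∑ p ∈ P, ∑ w : Fin n, if w ∈ p.1.1 ∧ w ∈ p.2.1 then 1 else 0 :=
          Finset.sum_comm
      _ = ∑ p ∈ P, k := by
          apply Finset.sum_congr rfl
          intro p hp
          have hadjp : (W.graph (k+1)).Adj p.1 p.2 := by
            rw [hP, Finset.mem_filter] at hp
            exact hp.2
          have hinter : (Finset.univ.filter fun w : Fin n => w ∈ p.1.1 ∧ w ∈ p.2.1)
              = p.1.1 ∩ p.2.1 := by
            ext w
            simp [Finset.mem_inter]
          rw [← Finset.card_filter, hinter]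
          have := W.card_inter_of_adj (k+1) hK1 hK2 p.1.1 p.2.1 hadjp
          omega
      _ = P.card * k := by rw [Finset.sum_const, smul_eq_mul]
  have hsum2 : ∑ w : Fin n, m w = (n - k) * (k + 1) := by
    calc ∑ w : Fin n, m w
        = ∑ w : Fin n, ∑ C : ↥(W.clusters (k+1)), if w ∈ C.1 then 1 else 0 := by
          refine Finset.sum_congr rfl fun w _ => ?_
          rw [hm]
          exact Finset.card_filter _ _
      _ = ∑ C : ↥(W.clusters (k+1)), ∑ w : Fin n, if w ∈ C.1 then 1 else 0 :=
          Finset.sum_comm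
      _ = ∑ C : ↥(W.clusters (k+1)), (k + 1) := by
          refine Finset.sum_congr rfl fun C _ => ?_
          have hfil : (Finset.univ.filter fun w : Fin n => w ∈ C.1) = C.1 := by
            ext w; simp
          rw [← Finset.card_filter, hfil]
          exact W.card_of_mem_clusters (k+1) hK1 hK2 C.1 C.2
      _ = (n - k) * (k + 1) := by
          rw [Finset.sum_const, smul_eq_mul, Finset.card_univ, hcV]
  have hle : ∀ w ∈ (Finset.univ : Finset (Fin n)), t w + 2 ≤ 2 * m w := by
    rintro w -
    obtain ⟨C, hC, hwC⟩ := vine_cover W (k+1) hK1 hK2 w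
    have hS : (Finset.univ.filter fun C : ↥(W.clusters (k+1)) => w ∈ C.1).Nonempty :=
      ⟨⟨C, hC⟩, Finset.mem_filter.2 ⟨Finset.mem_univ _, hwC⟩⟩
    have hb := tree_pairs_bound htree ⟨C, hC⟩
      (Finset.univ.filter fun C : ↥(W.clusters (k+1)) => w ∈ C.1) hS
    have hTeq : (Finset.univ.filter fun p :
          ↥(W.clusters (k+1)) × ↥(W.clusters (k+1)) => (W.graph (k+1)).Adj p.1 p.2 ∧
          p.1 ∈ (Finset.univ.filter fun C : ↥(W.clusters (k+1)) => w ∈ C.1) ∧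
          p.2 ∈ (Finset.univ.filter fun C : ↥(W.clusters (k+1)) => w ∈ C.1))
        = P.filter fun p => w ∈ p.1.1 ∧ w ∈ p.2.1 := by
      ext p
      simp only [hP, Finset.mem_filter, Finset.mem_univ, true_and]
    rw [hTeq] at hb
    exact hb
  have htot : ∑ w : Fin n, (t w + 2) = ∑ w : Fin n, 2 * m w := by
    rw [Finset.sum_add_distrib, hsum1, ← Finset.mul_sum, hsum2, Finset.sum_const,
      Finset.card_univ, Fintype.card_fin, hPcard, smul_eq_mul]
    obtain ⟨c, hc1, hc2⟩ : ∃ c, n - k - 1 = c ∧ n = c + k + 1 := ⟨n - k - 1, rfl, by omega⟩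
    rw [hc1, hc2]
    have : c + k + 1 - k = c + 1 := by omega
    rw [this]
    ring
  have hpt := (Finset.sum_eq_sum_iff_of_le hle).1 htot v (Finset.mem_univ v)
  -- now show 2 ≤ m v
  obtain ⟨C1, C2, hC1, hC2, hC12, hvC1, hvC2⟩ :=
    vine_two_clusters W k hk1 hk2 hn hadj v hvA hvB
  have hmv : 2 ≤ m v := by
    rw [hm]
    refine Finset.one_lt_card.2 ⟨⟨C1, hC1⟩, ?_, ⟨C2, hC2⟩, ?_, ?_⟩
    · exact Finset.mem_filter.2 ⟨Finset.mem_univ _, hvC1⟩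
    · exact Finset.mem_filter.2 ⟨Finset.mem_univ _, hvC2⟩
    · intro h
      exact hC12 (congrArg Subtype.val h)
  have htv : 0 < t v := by omega
  rw [ht] at htv
  obtain ⟨p, hp⟩ := Finset.card_pos.1 htv
  rw [Finset.mem_filter, hP, Finset.mem_filter] at hp
  obtain ⟨⟨-, hadjp⟩, hv1, hv2⟩ := hp
  exact ⟨p.1.1, p.2.1, hadjp, Finset.mem_inter.2 ⟨hv1, hv2⟩⟩
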